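/- Define moments Mₙ and cumulants Kₙ by the formal relation ∑_{m≥0} (1/m!) φ_O((∑_{r≥1} K_r)^{⊗m}) = ∑_{n≥0} Mₙ, where K_r carries formal degree r. Then for each n, Mₙ = ∑_{partitions of n} φ_O( ∏_{r=1}^n (1/s_r!) K_r^{⊗ s_r} ), where the sum runs over all sequences (s₁,...,sₙ) of nonnegative integers with ∑_{r=1}^n r·s_r = n (generalized Meeron formula). -/

import Mathlib

/-!
Expanding the `m`-th power, the degree-`n` part of `∑ₘ (1/m!) φ((∑ᵣ Kᵣ)^m)` is
`∑ₘ (1/m!) ∑ φ(K_{r₁} ⋯ K_{rₘ})` over ordered tuples of positive integers with `r₁ + ⋯ + rₘ = n`.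
By permutation invariance a term depends only on the multiplicities `s_r` of the tuple, and
exactly `m! / ∏ s_r!` tuples have given multiplicities, so `1/m!` turns into `∏ 1/s_r!`;
summing over `m` then regroups the terms by the partitions of `n`.
-/
open scoped BigOperators

/-- The moments `Mₙ` defined as the coefficient of `λ^n` in
`∑_{m≥0} (1/m!) φ_O((∑_{r≥1} λ^r K_r)^{⊗m})`: the coefficient of `λ^n` in the `m`-th
power is the sum over all ordered sequences `(r₁,...,r_m)` of positive integers with
`r₁+...+r_m = n` of `φ_O(K_{r₁} ⊗ ... ⊗ K_{r_m})`. -/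
noncomputable def meeronMoment {K V : Type*} [Field K] [AddCommGroup V] [Module K V]
    (φ : TensorAlgebra K V →ₗ[K] TensorAlgebra K V)
    (Kc : ℕ → TensorAlgebra K V) (n : ℕ) : TensorAlgebra K V :=
  ∑ m ∈ Finset.range (n + 1), (m.factorial : K)⁻¹ •
    ∑ c ∈ Finset.Nat.antidiagonalTuple m (n - m),
      φ (((List.finRange m).map fun i => Kc (c i + 1)).prod)

/-- The right-hand side of the generalized Meeron formula: the sum over all partitions
of `n`, i.e. sequences `(s₁,...,sₙ)` with `∑ r·s_r = n`, of
`φ_O(∏_{r=1}^n (1/s_r!) K_r^{⊗ s_r})`. -/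
noncomputable def meeronPartitionSum {K V : Type*} [Field K] [AddCommGroup V] [Module K V]
    (φ : TensorAlgebra K V →ₗ[K] TensorAlgebra K V)
    (Kc : ℕ → TensorAlgebra K V) (n : ℕ) : TensorAlgebra K V :=
  ∑ s ∈ (Fintype.piFinset fun _ : Fin n => Finset.range (n + 1)).filter
      (fun s => ∑ i, (i.1 + 1) * s i = n),
    (∏ i, ((s i).factorial : K)⁻¹) •
      φ (((List.finRange n).map fun i => Kc (i.1 + 1) ^ s i).prod)

open Finset

section Multiplicities

variable {ι : Type*} [DecidableEq ι] {m : ℕ}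

def multiplicities (x : Fin m → ι) (i : ι) : ℕ := #{j | x j = i}

theorem sum_multiplicities_smul [Fintype ι] {M : Type*} [AddCommMonoid M] (x : Fin m → ι)
    (w : ι → M) : ∑ i, multiplicities x i • w i = ∑ j, w (x j) := by
  rw [← sum_fiberwise univ x]
  refine sum_congr rfl fun i _ => ?_
  rw [multiplicities, ← sum_const]
  exact sum_congr rfl fun j hj => by rw [(mem_filter.1 hj).2]

theorem sum_multiplicities [Fintype ι] (x : Fin m → ι) : ∑ i, multiplicities x i = m := by
  simpa using sum_multiplicities_smul x (fun _ => (1 : ℕ))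

theorem card_multiplicities_eq_multinomial [Fintype ι] {k : ι → ℕ} (hk : ∑ i, k i = m) :
    #{x : Fin m → ι | multiplicities x = k} = Nat.multinomial univ k := by
  -- the coefficient of `∏ Xᵢ ^ kᵢ` in `(∑ Xᵢ) ^ m`, once from the product of `m` sums and
  -- once from the multinomial theorem
  set d : ι →₀ ℕ := Finsupp.equivFunOnFinite.symm k
  have hexpand : (∑ i, MvPolynomial.X i : MvPolynomial ι ℕ) ^ m
      = ∑ x : Fin m → ι, MvPolynomial.monomial (∑ j, Finsupp.single (x j) 1) 1 := by
    rw [← Fin.prod_const, Fintype.prod_sum]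
    simp only [MvPolynomial.monomial_sum_one, MvPolynomial.X]
  have hdeg : (d.sum fun _ k => k) = m := by
    rwa [Finsupp.sum_fintype _ _ fun _ => rfl]
  have hcoeff := MvPolynomial.coeff_sum_X_pow_of_fintype (R := ℕ) d m
  rw [hexpand, MvPolynomial.coeff_sum, if_pos hdeg,
    Finsupp.multinomial_eq_of_support_subset (subset_univ _)] at hcoeff
  simp only [MvPolynomial.coeff_monomial, sum_boole, Nat.cast_id] at hcoeff
  convert hcoeff using 4 with x
  · rw [funext_iff, DFunLike.ext_iff]
    simp only [multiplicities, Finsupp.finsetSum_apply, Finsupp.single_apply, sum_boole,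
      Nat.cast_id, Finsupp.equivFunOnFinite_symm_apply_apply, d]
  · rfl

theorem sum_comp_multiplicities [Fintype ι] {M : Type*} [AddCommMonoid M] (g : (ι → ℕ) → M) :
    ∑ x : Fin m → ι, g (multiplicities x)
      = ∑ k ∈ piAntidiag univ m, Nat.multinomial univ k • g k := by
  have hmaps : ∀ x ∈ (univ : Finset (Fin m → ι)), multiplicities x ∈ piAntidiag univ m :=
    fun x _ => mem_piAntidiag.2 ⟨sum_multiplicities x, fun i _ => mem_univ i⟩
  rw [← sum_fiberwise_of_maps_to hmaps]
  refine sum_congr rfl fun k hk => ?_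
  rw [← card_multiplicities_eq_multinomial (mem_piAntidiag.1 hk).1, ← sum_const]
  exact sum_congr rfl fun x hx => by rw [(mem_filter.1 hx).2]

end Multiplicities

theorem List.perm_flatMap_replicate_count {α : Type*} [DecidableEq α] {l L : List α}
    (hL : L.Nodup) (hl : ∀ a ∈ l, a ∈ L) :
    l.Perm (L.flatMap fun a => List.replicate (l.count a) a) := by
  rw [List.perm_iff_count]
  intro b
  rw [List.count_flatMap, ← List.sum_toFinset _ hL]
  simp only [Function.comp_apply, List.count_replicate, beq_iff_eq, sum_ite_eq', mem_toFinset,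
    left_eq_ite_iff]
  exact fun hb => List.count_eq_zero.2 fun h => hb (hl b h)

theorem count_map_finRange {m n : ℕ} (x : Fin m → Fin n) (i : Fin n) :
    ((List.finRange m).map x).count i = multiplicities x i := by
  rw [multiplicities, Fin.univ_def, ← Multiset.coe_count, ← Multiset.map_coe, Multiset.count_map,
    card_def]
  simp [Finset.filter_val, eq_comm]

theorem apply_prod_map_eq_apply_prod_pow_multiplicities {A B : Type*} [Monoid A] (f : A → B)
    (hf : ∀ l l' : List A, l.Perm l' → f l.prod = f l'.prod) {m n : ℕ} (a : Fin n → A)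
    (x : Fin m → Fin n) :
    f (((List.finRange m).map fun j => a (x j)).prod)
      = f (((List.finRange n).map fun i => a i ^ multiplicities x i).prod) := by
  have hperm : ((List.finRange m).map x).Perm
      ((List.finRange n).flatMap fun i => List.replicate (multiplicities x i) i) := by
    simpa only [count_map_finRange] using List.perm_flatMap_replicate_count
      (l := (List.finRange m).map x) (List.nodup_finRange n) fun i _ => List.mem_finRange i
  rw [← Function.comp_def a x, ← List.map_map, hf _ _ (hperm.map a)]
  simp only [List.flatMap_def, List.map_flatten, List.prod_flatten, List.map_map]
  congr 3
  funext i
  simp [List.map_replicate, List.prod_replicate]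

theorem inv_factorial_sum_mul_multinomial {K ι : Type*} [Semifield K] [CharZero K]
    (s : Finset ι) (k : ι → ℕ) :
    ((∑ i ∈ s, k i).factorial : K)⁻¹ * Nat.multinomial s k
      = ∏ i ∈ s, ((k i).factorial : K)⁻¹ := by
  have hne : (Nat.multinomial s k : K) ≠ 0 := Nat.cast_ne_zero.2 (Nat.multinomial_pos s k).ne'
  rw [← Nat.multinomial_spec, Nat.cast_mul, Nat.cast_prod, mul_inv, prod_inv_distrib, mul_assoc,
    inv_mul_cancel₀ hne, mul_one]

theorem lt_of_mem_antidiagonalTuple {m n : ℕ} (hmn : m ≤ n) {c : Fin m → ℕ}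
    (hc : c ∈ Finset.Nat.antidiagonalTuple m (n - m)) (j : Fin m) : c j < n := by
  have hle : c j ≤ ∑ j, c j := single_le_sum (fun _ _ => Nat.zero_le _) (mem_univ j)
  have hm : 0 < m := j.pos
  rw [Finset.Nat.mem_antidiagonalTuple.1 hc] at hle
  omega

theorem sum_antidiagonalTuple_eq_sum_fin {M : Type*} [AddCommMonoid M] {m n : ℕ} (hmn : m ≤ n)
    (f : (Fin m → ℕ) → M) :
    ∑ c ∈ Finset.Nat.antidiagonalTuple m (n - m), f c
      = ∑ x : Fin m → Fin n with ∑ j, ((x j : ℕ) + 1) = n, f fun j => x j := by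
  symm
  refine sum_nbij (fun x j => x j) (fun x hx => ?_) (fun x _ y _ h => ?_) (fun c hc => ?_)
    (fun _ _ => rfl)
  · rw [Finset.Nat.mem_antidiagonalTuple]
    have hsum := (mem_filter.1 hx).2
    rw [sum_add_distrib, sum_const, card_univ, Fintype.card_fin, smul_eq_mul, mul_one] at hsum
    exact Nat.eq_sub_of_add_eq hsum
  · exact funext fun j => Fin.ext (congrFun h j)
  · refine ⟨fun j => ⟨c j, lt_of_mem_antidiagonalTuple hmn hc j⟩,
      mem_filter.2 ⟨mem_univ _, ?_⟩, rfl⟩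
    dsimp only
    rw [sum_add_distrib, sum_const, card_univ, Fintype.card_fin, smul_eq_mul, mul_one]
    have hsum := Finset.Nat.mem_antidiagonalTuple.1 hc
    omega

theorem sum_antidiagonalTuple_eq_sum_multinomial_smul {A B : Type*} [Monoid A] [AddCommMonoid B]
    (f : A → B) (hf : ∀ l l' : List A, l.Perm l' → f l.prod = f l'.prod) (a : ℕ → A)
    {m n : ℕ} (hmn : m ≤ n) :
    ∑ c ∈ Finset.Nat.antidiagonalTuple m (n - m),
        f (((List.finRange m).map fun j => a (c j + 1)).prod)
      = ∑ k ∈ piAntidiag univ m with ∑ i : Fin n, (i.1 + 1) * k i = n,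
          Nat.multinomial univ k • f (((List.finRange n).map fun i => a (i.1 + 1) ^ k i).prod) := by
  let g : (Fin n → ℕ) → B := fun k =>
    if ∑ i : Fin n, (i.1 + 1) * k i = n then
      f (((List.finRange n).map fun i => a (i.1 + 1) ^ k i).prod)
    else 0
  calc _ = ∑ x : Fin m → Fin n, g (multiplicities x) := by
        rw [sum_antidiagonalTuple_eq_sum_fin hmn, sum_filter]
        refine sum_congr rfl fun x _ => ?_
        have hweight : ∑ i : Fin n, (i.1 + 1) * multiplicities x i = ∑ j, ((x j : ℕ) + 1) := by
          simpa only [smul_eq_mul, mul_comm] using sum_multiplicities_smul x fun i => i.1 + 1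
        dsimp only [g]
        rw [← hweight,
          apply_prod_map_eq_apply_prod_pow_multiplicities f hf (fun i => a (i.1 + 1))]
    _ = ∑ k ∈ piAntidiag univ m, Nat.multinomial univ k • g k := sum_comp_multiplicities g
    _ = _ := by simp only [g, sum_filter, smul_ite, smul_zero]

theorem sum_range_sum_piAntidiag_filter {M : Type*} [AddCommMonoid M] (n : ℕ)
    (G : (Fin n → ℕ) → M) :
    ∑ m ∈ range (n + 1), ∑ k ∈ piAntidiag univ m with ∑ i : Fin n, (i.1 + 1) * k i = n, G k
      = ∑ k ∈ Fintype.piFinset (fun _ : Fin n => range (n + 1))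
          with ∑ i : Fin n, (i.1 + 1) * k i = n, G k := by
  have hle : ∀ (k : Fin n → ℕ) (i : Fin n), k i ≤ (i.1 + 1) * k i :=
    fun k i => Nat.le_mul_of_pos_left _ i.1.succ_pos
  have hmaps : ∀ k ∈ (Fintype.piFinset fun _ : Fin n => range (n + 1)).filter
      (fun k => ∑ i : Fin n, (i.1 + 1) * k i = n), ∑ i, k i ∈ range (n + 1) := by
    intro k hk
    exact mem_range.2 (Nat.lt_succ_of_le
      ((sum_le_sum fun i _ => hle k i).trans (mem_filter.1 hk).2.le))
  rw [← sum_fiberwise_of_maps_to hmaps]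
  refine sum_congr rfl fun m _ => sum_congr ?_ fun _ _ => rfl
  ext k
  simp only [mem_filter, mem_piAntidiag, Fintype.mem_piFinset, mem_range, mem_univ]
  constructor
  · rintro ⟨⟨hm, -⟩, hw⟩
    refine ⟨⟨fun i => Nat.lt_succ_of_le ?_, hw⟩, hm⟩
    calc k i ≤ (i.1 + 1) * k i := hle k i
      _ ≤ ∑ j : Fin n, (j.1 + 1) * k j :=
        single_le_sum (f := fun j : Fin n => (j.1 + 1) * k j) (fun _ _ => Nat.zero_le _)
          (mem_univ i)
      _ = n := hw
  · rintro ⟨⟨-, hw⟩, hm⟩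
    exact ⟨⟨hm, fun _ _ => trivial⟩, hw⟩

theorem generalized_meeron_formula_general
    {K V : Type*} [Field K] [CharZero K] [AddCommGroup V] [Module K V]
    (φ : TensorAlgebra K V →ₗ[K] TensorAlgebra K V)
    (hperm : ∀ l l' : List (TensorAlgebra K V), l.Perm l' → φ l.prod = φ l'.prod)
    (Kc : ℕ → TensorAlgebra K V) (n : ℕ) :
    meeronMoment φ Kc n = meeronPartitionSum φ Kc n := by
  rw [meeronMoment, meeronPartitionSum, ← sum_range_sum_piAntidiag_filter]
  refine sum_congr rfl fun m hm => ?_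
  rw [sum_antidiagonalTuple_eq_sum_multinomial_smul φ hperm Kc
    (Nat.lt_succ_iff.1 (mem_range.1 hm)), smul_sum]
  refine sum_congr rfl fun k hk => ?_
  rw [← Nat.cast_smul_eq_nsmul K, smul_smul, ← (mem_piAntidiag.1 (mem_filter.1 hk).1).1,
    inv_factorial_sum_mul_multinomial]

/-- generalized Meeron formula: with `φ_O` a linear, permutation-invariant,
idempotent map on the tensor algebra, the moments defined by the generalized exponential
relation satisfy, for each `n`,
`Mₙ = ∑_{partitions of n} φ_O(∏_{r=1}^n (1/s_r!) K_r^{⊗ s_r})`. -/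
theorem generalized_meeron_formula
    {K V : Type*} [Field K] [CharZero K] [AddCommGroup V] [Module K V]
    (φ : TensorAlgebra K V →ₗ[K] TensorAlgebra K V)
    (hidem : φ ∘ₗ φ = φ)
    (hperm : ∀ l l' : List (TensorAlgebra K V), l.Perm l' → φ l.prod = φ l'.prod)
    (Kc : ℕ → TensorAlgebra K V) (n : ℕ) :
    meeronMoment φ Kc n = meeronPartitionSum φ Kc n :=
  generalized_meeron_formula_general φ hperm Kc n
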